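/- For the partial product S_1 = ∏_{j=2}^{ℓ+1} [(Λ+ρ, α_{1j})]/[(ρ, α_{1j})] with Λ as above (coefficients n_1, n_ℓ equal to m plus constants, n_a ∈ {0,1}), one has S_1 ~ q^{-(ℓ+1)m} as m → ∞. -/
import Mathlib

open Finset Filter RealInnerProductSpace

/-- The q-number `[x] = (q^{-x} - q^x)/(q^{-1} - q)`. -/
noncomputable def qnum (q x : ℝ) : ℝ := (q ^ (-x) - q ^ x) / (q⁻¹ - q)

lemma qnum_pos' {q : ℝ} (hq0 : 0 < q) (hq1 : q < 1) {x : ℝ} (hx : 0 < x) :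
    0 < qnum q x := by
  have h1 : q ^ x < q ^ (-x) := Real.rpow_lt_rpow_of_exponent_gt hq0 hq1 (by linarith)
  have h2 : q < q⁻¹ := by
    have := mul_inv_cancel₀ (ne_of_gt hq0)
    nlinarith
  exact div_pos (sub_pos.mpr h1) (sub_pos.mpr h2)

lemma aux_tendsto' {q : ℝ} (hq0 : 0 < q) (hq1 : q < 1) (e : ℕ) (he : 0 < e) (b : ℝ) :
    Tendsto (fun m : ℕ => q ^ (e * m) * qnum q ((e : ℝ) * m + b)) atTop
      (nhds (q ^ (-b) / (q⁻¹ - q))) := by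
  have key : ∀ m : ℕ, q ^ (e * m) * qnum q ((e : ℝ) * m + b)
      = (q ^ (-b) - q ^ b * (q ^ (2 * e)) ^ m) / (q⁻¹ - q) := by
    intro m
    unfold qnum
    rw [mul_div_assoc']
    congr 1
    have hm : (q : ℝ) ^ (e * m) = q ^ (((e * m : ℕ) : ℝ)) := by
      rw [Real.rpow_natCast]
    have hm2 : (q ^ (2 * e)) ^ m = q ^ (((2 * e * m : ℕ) : ℝ)) := by
      rw [← pow_mul, Real.rpow_natCast]
    rw [hm, hm2, mul_sub, ← Real.rpow_add hq0, ← Real.rpow_add hq0, ← Real.rpow_add hq0]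
    push_cast
    have e1 : (e : ℝ) * m + -((e : ℝ) * m + b) = -b := by ring
    have e2 : (e : ℝ) * m + ((e : ℝ) * m + b) = b + 2 * e * m := by ring
    rw [e1, e2]
  simp only [key]
  have hr0 : (0 : ℝ) ≤ q ^ (2 * e) := le_of_lt (pow_pos hq0 _)
  have hr1 : q ^ (2 * e) < 1 := pow_lt_one₀ hq0.le hq1 (by omega)
  have h0 : Tendsto (fun m : ℕ => (q ^ (2 * e)) ^ m) atTop (nhds 0) :=
    tendsto_pow_atTop_nhds_zero_of_lt_one hr0 hr1
  have hc : Tendsto (fun _ : ℕ => q ^ (-b)) atTop (nhds (q ^ (-b))) := tendsto_const_nhds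
  have := (hc.sub (h0.const_mul (q ^ b))).div_const (q⁻¹ - q)
  simpa using this

/-- Asymptotics of the partial product
`S_1(m) = ∏_{j=2}^{ℓ+1} [(Λ_m+ρ, α_{1j})]/[(ρ, α_{1j})]` for
`Λ_m = (m+c_1)ω_1 + n_a ω_a + (m+c_2)ω_ℓ`, `n_a ∈ {0,1}`:
`S_1(m) ~ q^{-(ℓ+1)m}` as `m → ∞`. -/
theorem partial_product_S1_asymptotic {V : Type*} [NormedAddCommGroup V]
    [InnerProductSpace ℝ V] (q : ℝ) (hq0 : 0 < q) (hq1 : q < 1)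
    (ℓ : ℕ) (hℓ : 3 ≤ ℓ) (α ω : ℕ → V)
    (hdual : ∀ i ∈ Icc 1 ℓ, ∀ j ∈ Icc 1 ℓ, ⟪α i, ω j⟫ = if i = j then 1 else 0)
    (ρ : V) (hρ : ρ = ∑ j ∈ Icc 1 ℓ, ω j)
    (a : ℕ) (ha2 : 2 ≤ a) (haℓ : a ≤ ℓ - 1)
    (c₁ c₂ : ℕ) (nₐ : ℝ) (hnₐ : nₐ = 0 ∨ nₐ = 1)
    (Λ : ℕ → V)
    (hΛ : ∀ m : ℕ, Λ m = ((m : ℝ) + c₁) • ω 1 + nₐ • ω a + ((m : ℝ) + c₂) • ω ℓ)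
    (S₁ : ℕ → ℝ)
    (hS₁ : ∀ m : ℕ, S₁ m = ∏ j ∈ Icc 2 (ℓ + 1),
      qnum q ⟪Λ m + ρ, ∑ k ∈ Ico 1 j, α k⟫ / qnum q ⟪ρ, ∑ k ∈ Ico 1 j, α k⟫) :
    ∃ C : ℝ, 0 < C ∧
      Tendsto (fun m : ℕ => q ^ ((ℓ + 1) * m) * S₁ m) atTop (nhds C) := by
  have hdpos : 0 < q⁻¹ - q := by
    have := mul_inv_cancel₀ (ne_of_gt hq0)
    nlinarith
  have h1mem : 1 ∈ Icc 1 ℓ := by simp; omega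
  have hamem : a ∈ Icc 1 ℓ := by simp only [mem_Icc]; omega
  have hlmem : ℓ ∈ Icc 1 ℓ := by simp only [mem_Icc]; omega
  -- inner products with single roots
  have hρα : ∀ k ∈ Icc 1 ℓ, ⟪ρ, α k⟫ = 1 := by
    intro k hk
    rw [hρ, sum_inner]
    have h : ∀ i ∈ Icc 1 ℓ, ⟪ω i, α k⟫ = if k = i then (1:ℝ) else 0 := by
      intro i hi; rw [real_inner_comm]; exact hdual k hk i hi
    rw [Finset.sum_congr rfl h]
    simp [hk]
  have hΛα : ∀ k ∈ Icc 1 ℓ, ∀ m : ℕ, ⟪Λ m, α k⟫ =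
      (if k = 1 then ((m : ℝ) + c₁) else 0) + (if k = a then nₐ else 0) +
      (if k = ℓ then ((m : ℝ) + c₂) else 0) := by
    intro k hk m
    rw [hΛ m, inner_add_left, inner_add_left, real_inner_smul_left,
      real_inner_smul_left, real_inner_smul_left,
      real_inner_comm (α k) (ω 1), real_inner_comm (α k) (ω a), real_inner_comm (α k) (ω ℓ),
      hdual k hk 1 h1mem, hdual k hk a hamem, hdual k hk ℓ hlmem]
    split_ifs <;> ring
  -- exponents and constants
  set E : ℕ → ℕ := fun j => if j = ℓ + 1 then 2 else 1 with hE
  set B : ℕ → ℝ := fun j => (c₁ : ℝ) + ((j : ℝ) - 1) + nₐ * (if a < j then 1 else 0)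
      + (c₂ : ℝ) * (if ℓ < j then 1 else 0) with hB
  have hEpos : ∀ j, 0 < E j := by intro j; simp only [hE]; split_ifs <;> omega
  have hρsum : ∀ j ∈ Icc 2 (ℓ + 1), ⟪ρ, ∑ k ∈ Ico 1 j, α k⟫ = (j : ℝ) - 1 := by
    intro j hj
    simp only [mem_Icc] at hj
    rw [inner_sum]
    rw [Finset.sum_congr rfl (fun k hk => by
      simp only [mem_Ico] at hk
      exact hρα k (by simp only [mem_Icc]; omega))]
    simp [Nat.cast_sub (by omega : 1 ≤ j)]
  have hnum : ∀ j ∈ Icc 2 (ℓ + 1), ∀ m : ℕ,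
      ⟪Λ m + ρ, ∑ k ∈ Ico 1 j, α k⟫ = (E j : ℝ) * m + B j := by
    intro j hj m
    simp only [mem_Icc] at hj
    rw [inner_sum]
    rw [Finset.sum_congr rfl (fun k hk => by
      have hk' : k ∈ Icc 1 ℓ := by simp only [mem_Ico] at hk; simp only [mem_Icc]; omega
      rw [inner_add_left, hΛα k hk' m, hρα k hk'])]
    simp only [Finset.sum_add_distrib, Finset.sum_ite_eq', Finset.sum_const, nsmul_eq_mul,
      mul_one, Nat.card_Ico, mem_Ico]
    have h1 : (1 ≤ 1 ∧ 1 < j) := by omega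
    rw [if_pos h1]
    have haiff : (1 ≤ a ∧ a < j) ↔ a < j := by omega
    have hliff : (1 ≤ ℓ ∧ ℓ < j) ↔ ℓ < j := by omega
    rw [if_congr haiff rfl rfl, if_congr hliff rfl rfl]
    by_cases hj' : j = ℓ + 1
    · subst hj'
      rw [if_pos (by omega : a < ℓ + 1), if_pos (by omega : ℓ < ℓ + 1)]
      simp only [hE, hB, if_pos rfl, if_pos (by omega : a < ℓ + 1),
        if_pos (by omega : ℓ < ℓ + 1)]
      push_cast [Nat.cast_sub (by omega : 1 ≤ ℓ + 1)]
      ring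
    · rw [if_neg (by omega : ¬ ℓ < j)]
      simp only [hE, hB, if_neg hj', if_neg (by omega : ¬ ℓ < j)]
      by_cases haj : a < j <;>
        simp only [if_pos, if_neg, haj, if_true, if_false] <;>
        push_cast [Nat.cast_sub (by omega : 1 ≤ j)] <;> ring
  have hsumE : ∑ j ∈ Icc 2 (ℓ + 1), E j = ℓ + 1 := by
    have h : ∀ j ∈ Icc 2 (ℓ + 1), E j = (if j = ℓ + 1 then 1 else 0) + 1 := by
      intro j _; simp only [hE]; split_ifs <;> rfl
    rw [Finset.sum_congr rfl h, Finset.sum_add_distrib, Finset.sum_ite_eq',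
      if_pos (by simp only [mem_Icc]; omega : ℓ + 1 ∈ Icc 2 (ℓ + 1))]
    simp [Nat.card_Icc]
    omega
  have key : ∀ m : ℕ, q ^ ((ℓ + 1) * m) * S₁ m =
      ∏ j ∈ Icc 2 (ℓ + 1),
        (q ^ (E j * m) * qnum q ((E j : ℝ) * m + B j)) / qnum q ((j : ℝ) - 1) := by
    intro m
    have : ∀ j ∈ Icc 2 (ℓ + 1),
        (q ^ (E j * m) * qnum q ((E j : ℝ) * m + B j)) / qnum q ((j : ℝ) - 1)
        = q ^ (E j * m) * (qnum q ⟪Λ m + ρ, ∑ k ∈ Ico 1 j, α k⟫ /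
            qnum q ⟪ρ, ∑ k ∈ Ico 1 j, α k⟫) := by
      intro j hj
      rw [hnum j hj m, hρsum j hj, mul_div_assoc]
    rw [Finset.prod_congr rfl this, Finset.prod_mul_distrib,
      Finset.prod_pow_eq_pow_sum, ← Finset.sum_mul, hsumE, hS₁ m]
  have hlim : ∀ j ∈ Icc 2 (ℓ + 1),
      Tendsto (fun m : ℕ =>
        (q ^ (E j * m) * qnum q ((E j : ℝ) * m + B j)) / qnum q ((j : ℝ) - 1)) atTop
        (nhds (q ^ (-(B j)) / (q⁻¹ - q) / qnum q ((j : ℝ) - 1))) := by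
    intro j hj
    exact (aux_tendsto' hq0 hq1 (E j) (hEpos j) (B j)).div_const _
  refine ⟨∏ j ∈ Icc 2 (ℓ + 1), q ^ (-(B j)) / (q⁻¹ - q) / qnum q ((j : ℝ) - 1), ?_, ?_⟩
  · apply Finset.prod_pos
    intro j hj
    simp only [mem_Icc] at hj
    have hqj : 0 < qnum q ((j : ℝ) - 1) := by
      apply qnum_pos' hq0 hq1
      have : (2 : ℝ) ≤ j := by exact_mod_cast hj.1
      linarith
    exact div_pos (div_pos (Real.rpow_pos_of_pos hq0 _) hdpos) hqj
  · have := tendsto_finset_prod (Icc 2 (ℓ + 1)) hlim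
    convert this using 1
    funext m
    exact key m
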